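/- Let A be a class of graphs with weighting τ such that A_n ≠ ∅ for infinitely many n. Suppose there are constants 0 < δ ≤ 1, 0 < η ≤ 1 and a function g(n) = (1+o(1))^n such that τ(A_n) ≥ τ(A_{n−j}) · (n)_j · η^j · g(n) for each sufficiently large n and each j with 1 ≤ j ≤ δn. Then A, τ maintains at least factorial growth with the same η; that is, for each ε > 0, for each sufficiently large n and each 1 ≤ j < n, τ(A_n) ≥ τ(A_{n−j}) · (n)_j · η^j · e^{−εn}. -/
import Mathlib


open scoped BigOperators
open Classical Filter

namespace WeightedGraphs

/-- A (labelled) graph class: for each `n`, a set of simple graphs on vertex set `Fin n`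
(representing `{1, …, n}`). -/
abbrev GraphClass := ∀ n : ℕ, Set (SimpleGraph (Fin n))

/-- `e(G)`: the number of edges of `G`. -/
noncomputable def numEdges {n : ℕ} (G : SimpleGraph (Fin n)) : ℕ := G.edgeSet.ncard

/-- `κ(G)`: the number of connected components of `G`. -/
noncomputable def numComps {n : ℕ} (G : SimpleGraph (Fin n)) : ℕ := Nat.card G.ConnectedComponent

/-- The weight `τ(G) = λ^{e(G)} ν^{κ(G)}` of a graph. -/
noncomputable def wt {n : ℕ} (lam nu : ℝ) (G : SimpleGraph (Fin n)) : ℝ :=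
  lam ^ numEdges G * nu ^ numComps G

/-- `τ(A_n)`, the total weight of the graphs in `A` on vertex set `{1,…,n}`. -/
noncomputable def tau (A : GraphClass) (lam nu : ℝ) (n : ℕ) : ℝ :=
  ∑ G ∈ Finset.univ.filter (fun G : SimpleGraph (Fin n) => G ∈ A n), wt lam nu G

/-- A graph class is closed under isomorphism. -/
def IsoClosed (A : GraphClass) : Prop :=
  ∀ n : ℕ, ∀ G G' : SimpleGraph (Fin n), G ∈ A n → Nonempty (G ≃g G') → G' ∈ A n

/-- `Pr(R_n ∈ P)` for the `τ`-weighted random graph `R_n ∈_τ A`. -/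
noncomputable def prob (A : GraphClass) (lam nu : ℝ) (n : ℕ)
    (P : SimpleGraph (Fin n) → Prop) : ℝ :=
  (∑ G ∈ Finset.univ.filter (fun G : SimpleGraph (Fin n) => G ∈ A n ∧ P G), wt lam nu G) /
    tau A lam nu n

/-- `E[X(R_n)]` for the `τ`-weighted random graph `R_n ∈_τ A`. -/
noncomputable def expec (A : GraphClass) (lam nu : ℝ) (n : ℕ)
    (X : SimpleGraph (Fin n) → ℝ) : ℝ :=
  (∑ G ∈ Finset.univ.filter (fun G : SimpleGraph (Fin n) => G ∈ A n), X G * wt lam nu G) /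
    tau A lam nu n

/-- `H` is a minor of `G` (branch-set / contraction definition). -/
def IsMinorOf {α β : Type*} (H : SimpleGraph α) (G : SimpleGraph β) : Prop :=
  ∃ B : α → Set β,
    (∀ i, (B i).Nonempty) ∧
    (Pairwise fun i j => Disjoint (B i) (B j)) ∧
    (∀ i, (G.induce (B i)).Connected) ∧
    (∀ i j, H.Adj i j → ∃ u ∈ B i, ∃ v ∈ B j, G.Adj u v)

/-- A graph class is minor-closed. -/
def MinorClosed (A : GraphClass) : Prop :=
  ∀ (m n : ℕ) (H : SimpleGraph (Fin m)) (G : SimpleGraph (Fin n)),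
    G ∈ A n → IsMinorOf H G → H ∈ A m

/-- A graph class is bridge-addable: we may add an edge joining two distinct components. -/
def BridgeAddable (A : GraphClass) : Prop :=
  ∀ n : ℕ, ∀ G : SimpleGraph (Fin n), G ∈ A n → ∀ u v : Fin n, ¬ G.Reachable u v →
    G ⊔ SimpleGraph.fromEdgeSet {s(u, v)} ∈ A n

/-- The disjoint union of a graph on `{1,…,m}` and a graph on `{1,…,n}`,
as a graph on `{1,…,m+n}`. -/
def disjUnion {m n : ℕ} (G : SimpleGraph (Fin m)) (H : SimpleGraph (Fin n)) :
    SimpleGraph (Fin (m + n)) :=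
  (G.sum H).map finSumFinEquiv.toEmbedding

/-- Transport a graph along an equality of vertex counts. -/
def castGraph {m n : ℕ} (h : m = n) (G : SimpleGraph (Fin m)) : SimpleGraph (Fin n) :=
  G.map (finCongr h).toEmbedding

/-- `kH`: the disjoint union of `k` copies of `H`. -/
def nCopies {m : ℕ} (H : SimpleGraph (Fin m)) : (k : ℕ) → SimpleGraph (Fin (k * m))
  | 0 => ⊥
  | k + 1 => castGraph (by ring) (disjUnion (nCopies H k) H)

/-- `H` is freely addable to `A`: the disjoint union `G ∪ H` is in `A` for each `G ∈ A`. -/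
def FreelyAddable (A : GraphClass) {k : ℕ} (H : SimpleGraph (Fin k)) : Prop :=
  ∀ (n : ℕ) (G : SimpleGraph (Fin n)), G ∈ A n → disjUnion G H ∈ A (n + k)

/-- `F_A`: the class of graphs freely addable to `A`. -/
def freeClass (A : GraphClass) : GraphClass := fun k => {H | FreelyAddable A H}

/-- `H` is limited in `A`: some disjoint union of copies of `H` is not in `A`. -/
def Limited (A : GraphClass) {m : ℕ} (H : SimpleGraph (Fin m)) : Prop :=
  ∃ k : ℕ, 0 < k ∧ nCopies H k ∉ A (k * m)

/-- `A` is (freely-addable/limited) dichotomous. -/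
def Dichotomous (A : GraphClass) : Prop :=
  ∀ n : ℕ, ∀ G ∈ A n, FreelyAddable A G ∨ Limited A G

/-- The induced subgraph on the support of the component `c` of `G` is (isomorphic to) a member
of the class `A`. -/
def componentIn (A : GraphClass) {n : ℕ} (G : SimpleGraph (Fin n))
    (c : G.ConnectedComponent) : Prop :=
  ∃ (k : ℕ) (H : SimpleGraph (Fin k)), H ∈ A k ∧ Nonempty ((G.induce c.supp) ≃g H)

/-- `A` is decomposable: a graph is in `A` iff each of its components is. -/
def Decomposable (A : GraphClass) : Prop :=
  ∀ (n : ℕ) (G : SimpleGraph (Fin n)), G ∈ A n ↔ ∀ c : G.ConnectedComponent, componentIn A G c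

/-- `A` is addable: decomposable and bridge-addable. -/
def Addable (A : GraphClass) : Prop := Decomposable A ∧ BridgeAddable A

/-- `A` is proper: it is not the class of all graphs, and contains a graph with an edge. -/
def Proper (A : GraphClass) : Prop :=
  (∃ (n : ℕ) (G : SimpleGraph (Fin n)), G ∉ A n) ∧
  (∃ (n : ℕ), ∃ G ∈ A n, 1 ≤ numEdges G)

/-- The class of connected graphs in `A`. -/
def connClass (A : GraphClass) : GraphClass := fun n => {G | G ∈ A n ∧ G.Connected}

/-- The subclass `A^{δ≥2}` of graphs in `A` with minimum degree at least 2. -/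
def minDeg2 (A : GraphClass) : GraphClass :=
  fun n => {G | G ∈ A n ∧ ∀ v : Fin n, 2 ≤ (G.neighborSet v).ncard}

/-- `A, τ` has growth constant `γ`: `(τ(A_n)/n!)^{1/n} → γ ∈ (0,∞)`. -/
def HasGrowthConstant (A : GraphClass) (lam nu γ : ℝ) : Prop :=
  0 < γ ∧
    Tendsto (fun n : ℕ => (tau A lam nu n / n.factorial) ^ ((n : ℝ)⁻¹)) atTop (nhds γ)

/-- `A, τ` is smooth with limit ratio `γ`: `τ(A_n)/(n τ(A_{n-1})) → γ ∈ (0,∞)`. -/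
def SmoothWith (A : GraphClass) (lam nu γ : ℝ) : Prop :=
  0 < γ ∧
    Tendsto (fun n : ℕ => tau A lam nu n / (n * tau A lam nu (n - 1))) atTop (nhds γ)

/-- `A, τ` is smooth. -/
def IsSmooth (A : GraphClass) (lam nu : ℝ) : Prop := ∃ γ : ℝ, SmoothWith A lam nu γ

/-- The exponential generating function `A(x, τ) = Σ_n τ(A_n) x^n / n!`. -/
noncomputable def egf (A : GraphClass) (lam nu x : ℝ) : ℝ :=
  ∑' n : ℕ, tau A lam nu n * x ^ n / n.factorial

/-- `A(x,τ)` is finite (absolutely convergent) at `x`. -/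
def EgfSummable (A : GraphClass) (lam nu x : ℝ) : Prop :=
  Summable (fun n : ℕ => tau A lam nu n * x ^ n / n.factorial)

/-- The radius of convergence `ρ(A, τ)` of `A(x, τ)`, as an extended nonnegative real. -/
noncomputable def egfRadius (A : GraphClass) (lam nu : ℝ) : ENNReal :=
  ⨆ (r : NNReal) (_ : EgfSummable A lam nu r), (r : ENNReal)

/-- The radius of convergence as a real number. -/
noncomputable def radiusR (A : GraphClass) (lam nu : ℝ) : ℝ := (egfRadius A lam nu).toReal

/-- `g(n) = (1+o(1))^n`. -/
def SubExpOne (g : ℕ → ℝ) : Prop :=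
  ∀ ε : ℝ, 0 < ε → ∀ᶠ n : ℕ in atTop, (1 - ε) ^ n ≤ g n ∧ g n ≤ (1 + ε) ^ n

/-- `A, τ` maintains at least factorial growth:
`τ(A_n) ≥ τ(A_{n-j}) (n)_j η^j e^{-εn}` eventually, for some `η > 0` and every `ε > 0`. -/
def MaintainsFactorialGrowth (A : GraphClass) (lam nu : ℝ) : Prop :=
  ∃ η : ℝ, 0 < η ∧ ∀ ε : ℝ, 0 < ε → ∀ᶠ n : ℕ in atTop, ∀ j : ℕ, 1 ≤ j → j < n →
    tau A lam nu (n - j) * (n.descFactorial j) * η ^ j * Real.exp (-ε * n) ≤ tau A lam nu n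

/-- `A, τ` is well-behaved. -/
def WellBehaved (A : GraphClass) (lam nu : ℝ) : Prop :=
  IsoClosed A ∧ Proper A ∧ MinorClosed A ∧ BridgeAddable A ∧ Dichotomous A ∧
  (∃ γ : ℝ, HasGrowthConstant A lam nu γ) ∧
  ((∀ n : ℕ, 1 ≤ n → minDeg2 A n = ∅) ∨
    ENNReal.ofReal lam⁻¹ ≤ egfRadius (minDeg2 A) lam nu ∨
    MaintainsFactorialGrowth (minDeg2 A) lam nu)

/- ### The big component, the fragments, and the 2-core -/

/-- The vertices lying in components of maximum order. -/
noncomputable def maxCompVerts {n : ℕ} (G : SimpleGraph (Fin n)) : Finset (Fin n) :=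
  Finset.univ.filter fun v => ∀ w : Fin n,
    (G.connectedComponentMk w).supp.ncard ≤ (G.connectedComponentMk v).supp.ncard

lemma maxCompVerts_nonempty {n : ℕ} (hn : 0 < n) (G : SimpleGraph (Fin n)) :
    (maxCompVerts G).Nonempty := by
  obtain ⟨b, _, hb⟩ := Finset.exists_max_image Finset.univ
    (fun v => (G.connectedComponentMk v).supp.ncard) ⟨⟨0, hn⟩, Finset.mem_univ _⟩
  exact ⟨b, Finset.mem_filter.mpr ⟨Finset.mem_univ _, fun w => hb w (Finset.mem_univ _)⟩⟩

/-- The vertex set of `Big(G)`, the lexicographically first component of maximum order. -/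
noncomputable def bigCompSupp {n : ℕ} (G : SimpleGraph (Fin n)) : Set (Fin n) :=
  if hn : 0 < n then
    (G.connectedComponentMk ((maxCompVerts G).min' (maxCompVerts_nonempty hn G))).supp
  else ∅

/-- The vertex set of `Frag(G)`. -/
noncomputable def fragSupp {n : ℕ} (G : SimpleGraph (Fin n)) : Set (Fin n) := (bigCompSupp G)ᶜ

/-- `frag(G)`, the number of vertices of `Frag(G)`. -/
noncomputable def fragCard {n : ℕ} (G : SimpleGraph (Fin n)) : ℕ := (fragSupp G).ncard

/-- `Frag(G)` lies in the class `A` (up to the canonical relabelling). -/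
def fragIn (A : GraphClass) {n : ℕ} (G : SimpleGraph (Fin n)) : Prop :=
  ∃ (k : ℕ) (H : SimpleGraph (Fin k)), H ∈ A k ∧ Nonempty ((G.induce (fragSupp G)) ≃g H)

/-- The vertex set of the 2-core of `G`: the union of all sets `S` of vertices such that every
vertex of `S` has at least two neighbours inside `S`. -/
noncomputable def coreSupp {n : ℕ} (G : SimpleGraph (Fin n)) : Set (Fin n) :=
  ⋃₀ {S : Set (Fin n) | ∀ v ∈ S, 2 ≤ (G.neighborSet v ∩ S).ncard}

/-- `v(core(G))`, the number of vertices of the 2-core of `G`. -/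
noncomputable def coreCard {n : ℕ} (G : SimpleGraph (Fin n)) : ℕ := (coreSupp G).ncard

/- ### Unlabelled graphs and the Boltzmann Poisson random graph -/

/-- The setoid of finite labelled graphs up to isomorphism. -/
def ugSetoid : Setoid (Σ n : ℕ, SimpleGraph (Fin n)) where
  r x y := Nonempty (x.2 ≃g y.2)
  iseqv := ⟨fun x => ⟨RelIso.refl _⟩,
    fun ⟨e⟩ => ⟨e.symm⟩, fun ⟨e⟩ ⟨f⟩ => ⟨e.trans f⟩⟩

/-- The type of unlabelled finite graphs. -/
def UGraph : Type := Quotient ugSetoid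

noncomputable instance : MeasurableSpace UGraph := ⊤

/-- `v(H)` for an unlabelled graph `H`. -/
noncomputable def UGraph.nv (H : UGraph) : ℕ := H.out.1

/-- A representative of the unlabelled graph `H`, on vertex set `{1,…,v(H)}`. -/
noncomputable def UGraph.rep (H : UGraph) : SimpleGraph (Fin H.out.1) := H.out.2

/-- `e(H)` for an unlabelled graph `H`. -/
noncomputable def UGraph.ne (H : UGraph) : ℕ := numEdges H.rep

/-- `κ(H)` for an unlabelled graph `H`. -/
noncomputable def UGraph.nk (H : UGraph) : ℕ := numComps H.rep

/-- `aut(H)`, the number of automorphisms of `H`. -/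
noncomputable def UGraph.aut (H : UGraph) : ℕ := Nat.card (H.rep ≃g H.rep)

/-- Membership of an unlabelled graph in (the unlabelled class `𝒰A` of) a class `A`. -/
def UGraph.memClass (A : GraphClass) (H : UGraph) : Prop := H.out.2 ∈ A H.out.1

/-- `μ(H) = ρ^{v(H)} λ^{e(H)} ν^{κ(H)} / aut(H)`. -/
noncomputable def bpMu (lam nu rho : ℝ) (H : UGraph) : ℝ :=
  rho ^ H.nv * lam ^ H.ne * nu ^ H.nk / H.aut

/-- `κ(G, H)`: the number of components of the unlabelled graph `G` isomorphic to `H`. -/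
noncomputable def UGraph.compCount (G H : UGraph) : ℕ :=
  Nat.card {c : G.rep.ConnectedComponent // Nonempty ((G.rep.induce c.supp) ≃g H.rep)}

/-- `κ(G, H)`: the number of components of a labelled graph `G` isomorphic to `H`. -/
noncomputable def compCountG {n m : ℕ} (G : SimpleGraph (Fin n)) (H : SimpleGraph (Fin m)) : ℕ :=
  Nat.card {c : G.ConnectedComponent // Nonempty ((G.induce c.supp) ≃g H)}

end WeightedGraphs
/- ### Further notions: trees, subdivisions, surfaces, cycles, cores, pendant appearances -/

namespace WeightedGraphs
open Classical Filter
/-- The class of trees. -/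
def treeClass : GraphClass := fun _ => {G | G.IsTree}

/-- The class of forests (acyclic graphs). -/
def forestClass : GraphClass := fun _ => {G | G.IsAcyclic}

/-- The graph obtained from `G` by subdividing the edge `uv`, the subdividing vertex being the
new last vertex. -/
def subdivide {n : ℕ} (G : SimpleGraph (Fin n)) (u v : Fin n) : SimpleGraph (Fin (n + 1)) :=
  (G.deleteEdges {s(u, v)}).map Fin.castSuccEmb ⊔
    SimpleGraph.fromEdgeSet {s(Fin.castSucc u, Fin.last n), s(Fin.castSucc v, Fin.last n)}

/-- `A` is closed under subdividing edges. -/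
def ClosedUnderSubdivision (A : GraphClass) : Prop :=
  ∀ (n : ℕ) (G : SimpleGraph (Fin n)), G ∈ A n → ∀ u v : Fin n, G.Adj u v →
    subdivide G u v ∈ A (n + 1)

/-- `A, τ` is very well-behaved. -/
def VeryWellBehaved (A : GraphClass) (lam nu : ℝ) : Prop :=
  IsoClosed A ∧ Proper A ∧ MinorClosed A ∧ BridgeAddable A ∧ Dichotomous A ∧
    (Decomposable A ∨ (ClosedUnderSubdivision A ∧ ∃ γ : ℝ, HasGrowthConstant A lam nu γ))

/-- The graph `G` embeds in the topological space `X`: vertices go to distinct points, edges to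
arcs which are internally disjoint from each other and from the vertex points. -/
def GraphEmbedsIn {n : ℕ} (G : SimpleGraph (Fin n)) (X : Type) [TopologicalSpace X] : Prop :=
  ∃ (p : Fin n → X) (γ : ∀ e ∈ G.edgeSet, C(unitInterval, X)),
    Function.Injective p ∧
    (∀ e he, Function.Injective (γ e he)) ∧
    (∀ e he, ⇑(γ e he) '' {0, 1} = p '' {v | v ∈ e}) ∧
    (∀ e he, Set.range (γ e he) ∩ Set.range p = p '' {v | v ∈ e}) ∧
    (∀ e he e' he', e ≠ e' →
      Set.range (γ e he) ∩ Set.range (γ e' he') = p '' {v | v ∈ e ∧ v ∈ e'})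

/-- `X` is a surface: a compact connected Hausdorff space, locally homeomorphic to the plane. -/
def IsSurface (X : Type) [TopologicalSpace X] : Prop :=
  CompactSpace X ∧ ConnectedSpace X ∧ T2Space X ∧
    ∀ x : X, ∃ U : Set X, IsOpen U ∧ x ∈ U ∧ Nonempty (U ≃ₜ EuclideanSpace ℝ (Fin 2))

/-- The class `G^S` of graphs embeddable on the surface `X`. -/
def surfaceClass (X : Type) [TopologicalSpace X] : GraphClass := fun _ => {G | GraphEmbedsIn G X}

/-- `G` contains `m` pairwise vertex-disjoint cycles. -/
def HasDisjointCycles {n : ℕ} (G : SimpleGraph (Fin n)) (m : ℕ) : Prop :=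
  ∃ (u : Fin m → Fin n) (c : ∀ i, G.Walk (u i) (u i)),
    (∀ i, (c i).IsCycle) ∧
    Pairwise fun i j => Disjoint {v | v ∈ (c i).support} {v | v ∈ (c j).support}

/-- The class of graphs with at most `k` vertex-disjoint cycles. -/
def atMostCycles (k : ℕ) : GraphClass := fun _ => {G | ¬ HasDisjointCycles G (k + 1)}

/-- `H` is 2-connected. -/
def TwoConnected {m : ℕ} (H : SimpleGraph (Fin m)) : Prop :=
  3 ≤ m ∧ ∀ v : Fin m, (H.induce {w | w ≠ v}).Connected

/-- The 2-core of `G` lies in the class `A` (up to the canonical relabelling). -/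
def coreIn (A : GraphClass) {n : ℕ} (G : SimpleGraph (Fin n)) : Prop :=
  ∃ (k : ℕ) (H : SimpleGraph (Fin k)), H ∈ A k ∧ Nonempty ((G.induce (coreSupp G)) ≃g H)

/-- `A` is trimmable: `G ∈ A ↔ core(G) ∈ A`. -/
def Trimmable (A : GraphClass) : Prop :=
  ∀ (n : ℕ) (G : SimpleGraph (Fin n)), G ∈ A n ↔ coreIn A G

/-- The rooted connected graph `H` (with root `r`) is freely attachable to `A`. -/
def FreelyAttachable (A : GraphClass) {h : ℕ} (H : SimpleGraph (Fin h)) (r : Fin h) : Prop :=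
  ∀ (n : ℕ) (G : SimpleGraph (Fin n)), G ∈ A n → ∀ v : Fin n,
    (disjUnion G H ⊔
      SimpleGraph.fromEdgeSet {s(Fin.castAdd h v, Fin.natAdd n r)}) ∈ A (n + h)

/-- `H` has a pendant appearance at the vertex set `W` in `G`. -/
def PendantAt {h n : ℕ} (H : SimpleGraph (Fin h)) (G : SimpleGraph (Fin n))
    (W : Finset (Fin n)) : Prop :=
  ∃ hW : W.card = h,
    (∀ i j : Fin h,
      H.Adj i j ↔ G.Adj (W.orderIsoOfFin hW i : Fin n) (W.orderIsoOfFin hW j : Fin n)) ∧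
    {p : Fin n × Fin n | p.1 ∈ W ∧ p.2 ∉ W ∧ G.Adj p.1 p.2}.ncard = 1 ∧
    (∀ u v : Fin n, u ∈ W → v ∉ W → G.Adj u v → ∀ w ∈ W, u ≤ w)

/-- `f_H(G)`: the number of pendant appearances of `H` in `G`. -/
noncomputable def pendCount {h n : ℕ} (H : SimpleGraph (Fin h)) (G : SimpleGraph (Fin n)) : ℕ :=
  (Finset.univ.filter fun W : Finset (Fin n) => PendantAt H G W).card

end WeightedGraphs
namespace WeightedGraphs
open Classical Filter

lemma descFactorial_split (a : ℕ) : ∀ (n b : ℕ),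
    n.descFactorial (a + b) = n.descFactorial a * (n - a).descFactorial b := by
  induction a with
  | zero => intro n b; simp
  | succ a ih =>
    intro n b
    cases n with
    | zero =>
      rw [show a + 1 + b = (a + b) + 1 from by omega, Nat.zero_descFactorial_succ,
        Nat.zero_descFactorial_succ, Nat.zero_mul]
    | succ n =>
      rw [show a + 1 + b = (a + b) + 1 from by omega, Nat.succ_descFactorial_succ, ih n b,
        Nat.succ_descFactorial_succ, Nat.succ_sub_succ, Nat.mul_assoc]

lemma tau_nonneg (A : GraphClass) {lam nu : ℝ} (hlam : 0 < lam) (hnu : 0 < nu) (n : ℕ) :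
    0 ≤ tau A lam nu n :=
  Finset.sum_nonneg fun G _ => le_of_lt (by unfold wt; positivity)

lemma tau_pos (A : GraphClass) {lam nu : ℝ} (hlam : 0 < lam) (hnu : 0 < nu) (n : ℕ)
    (hne : (A n).Nonempty) : 0 < tau A lam nu n := by
  obtain ⟨G, hG⟩ := hne
  refine Finset.sum_pos (fun G _ => by unfold wt; positivity) ?_
  exact ⟨G, Finset.mem_filter.mpr ⟨Finset.mem_univ _, hG⟩⟩

lemma tau_chain (A : GraphClass) (lam nu : ℝ) (hlam : 0 < lam) (hnu : 0 < nu)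
    (δ η c : ℝ) (hδ0 : 0 < δ) (hδ1 : δ ≤ 1) (hη0 : 0 < η) (hc : 0 < c)
    (N₀ : ℕ) (hN₀ : 2 ≤ δ * N₀)
    (H : ∀ n : ℕ, N₀ ≤ n → ∀ j : ℕ, 1 ≤ j → (j : ℝ) ≤ δ * n →
      tau A lam nu (n - j) * (n.descFactorial j) * η ^ j * Real.exp (-(c * n)) ≤ tau A lam nu n) :
    ∀ n k : ℕ, N₀ ≤ k → k ≤ n →
      tau A lam nu k * (n.descFactorial (n - k)) * η ^ (n - k) *
        Real.exp (-(2 * c / δ * n)) ≤ tau A lam nu n := by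
  have htau := tau_nonneg A hlam hnu
  intro n
  induction n using Nat.strong_induction_on with
  | _ n IH =>
  intro k hNk hkn
  rcases eq_or_lt_of_le hkn with rfl | hkn'
  · simp only [Nat.sub_self, Nat.descFactorial_zero, pow_zero, Nat.cast_one, mul_one]
    have h1 : Real.exp (-(2 * c / δ * k)) ≤ 1 := by
      rw [Real.exp_le_one_iff]
      have : (0:ℝ) ≤ 2 * c / δ * k := by positivity
      linarith
    calc tau A lam nu k * Real.exp (-(2 * c / δ * k)) ≤ tau A lam nu k * 1 :=
          mul_le_mul_of_nonneg_left h1 (htau k)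
      _ = tau A lam nu k := mul_one _
  · have hNn : N₀ ≤ n := le_trans hNk hkn
    by_cases hone : ((n - k : ℕ) : ℝ) ≤ δ * n
    · have h := H n hNn (n - k) (by omega) hone
      rw [show n - (n - k) = k from by omega] at h
      refine le_trans ?_ h
      apply mul_le_mul_of_nonneg_left _ (mul_nonneg (mul_nonneg (htau k) (Nat.cast_nonneg _))
        (pow_nonneg hη0.le _))
      apply Real.exp_le_exp.mpr
      have hcc : c ≤ 2 * c / δ := by rw [le_div_iff₀ hδ0]; nlinarith
      have hn0 : (0:ℝ) ≤ (n:ℝ) := Nat.cast_nonneg _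
      nlinarith
    · push_neg at hone
      have hδn2 : 2 ≤ δ * n := le_trans hN₀ (by
        have : (N₀ : ℝ) ≤ (n : ℝ) := Nat.cast_le.mpr hNn
        nlinarith)
      set j := ⌊δ * (n:ℝ)⌋₊ with hjdef
      have hjle : (j:ℝ) ≤ δ * n := Nat.floor_le (by positivity)
      have hjgt : δ * n - 1 < (j:ℝ) := Nat.sub_one_lt_floor _
      have hj1 : 1 ≤ j := by
        have : (1:ℝ) ≤ (j:ℝ) := by linarith
        exact_mod_cast this
      have hjnk : j < n - k := by
        have : (j:ℝ) < ((n - k : ℕ) : ℝ) := lt_of_le_of_lt hjle hone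
        exact_mod_cast this
      have hjn : j ≤ n := by omega
      have h1 := H n hNn j hj1 hjle
      have h2 := IH (n - j) (by omega) k hNk (by omega)
      have hsplit : (n.descFactorial (n - k) : ℝ)
          = (n.descFactorial j : ℝ) * ((n - j).descFactorial (n - j - k) : ℝ) := by
        rw [show n - k = j + (n - j - k) from by omega, descFactorial_split]
        push_cast
        ring
      have hpow : η ^ (n - k) = η ^ j * η ^ (n - j - k) := by
        rw [← pow_add]; congr 1; omega
      have hcast : ((n - j : ℕ) : ℝ) = (n:ℝ) - (j:ℝ) := by
        push_cast [Nat.cast_sub hjn]; ring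
      have hexp : Real.exp (-(2 * c / δ * n)) ≤
          Real.exp (-(c * n)) * Real.exp (-(2 * c / δ * ((n - j : ℕ) : ℝ))) := by
        rw [← Real.exp_add]
        apply Real.exp_le_exp.mpr
        rw [hcast]
        have hpos : (0:ℝ) < 2 * c / δ := by positivity
        have key : c * n ≤ 2 * c / δ * j := by
          calc c * n = (2 * c / δ) * (δ / 2 * n) := by field_simp
            _ ≤ (2 * c / δ) * j := mul_le_mul_of_nonneg_left (by linarith) hpos.le
        ring_nf
        ring_nf at key
        linarith
      calc tau A lam nu k * (n.descFactorial (n - k)) * η ^ (n - k) *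
              Real.exp (-(2 * c / δ * n))
          ≤ tau A lam nu k * (n.descFactorial (n - k)) * η ^ (n - k) *
              (Real.exp (-(c * n)) * Real.exp (-(2 * c / δ * ((n - j : ℕ) : ℝ)))) :=
            mul_le_mul_of_nonneg_left hexp (mul_nonneg (mul_nonneg (htau k)
              (Nat.cast_nonneg _)) (pow_nonneg hη0.le _))
        _ = (tau A lam nu k * ((n - j).descFactorial (n - j - k)) * η ^ (n - j - k) *
              Real.exp (-(2 * c / δ * ((n - j : ℕ) : ℝ)))) *
              ((n.descFactorial j) * η ^ j * Real.exp (-(c * n))) := by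
            rw [hsplit, hpow]; ring
        _ ≤ tau A lam nu (n - j) * ((n.descFactorial j) * η ^ j * Real.exp (-(c * n))) :=
            mul_le_mul_of_nonneg_right h2 (by positivity)
        _ = tau A lam nu (n - j) * (n.descFactorial j) * η ^ j * Real.exp (-(c * n)) := by ring
        _ ≤ tau A lam nu n := h1

end WeightedGraphs
namespace WeightedGraphs
open Classical Filter

/-- Lemma 3.7: if the factorial-growth inequality holds for all large `n` and
all `1 ≤ j ≤ δn`, then `A, τ` maintains at least factorial growth with the same `η`. -/
theorem local_factorial_growth
    (A : GraphClass) (lam nu : ℝ) (hlam : 0 < lam) (hnu : 0 < nu)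
    (hinf : ∀ N : ℕ, ∃ n : ℕ, N ≤ n ∧ (A n).Nonempty)
    (δ η : ℝ) (hδ0 : 0 < δ) (hδ1 : δ ≤ 1) (hη0 : 0 < η) (hη1 : η ≤ 1)
    (g : ℕ → ℝ) (hg : SubExpOne g)
    (hmain : ∀ᶠ n : ℕ in atTop, ∀ j : ℕ, 1 ≤ j → (j : ℝ) ≤ δ * n →
      tau A lam nu (n - j) * (n.descFactorial j) * η ^ j * g n ≤ tau A lam nu n) :
    ∀ ε : ℝ, 0 < ε → ∀ᶠ n : ℕ in atTop, ∀ j : ℕ, 1 ≤ j → j < n →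
      tau A lam nu (n - j) * (n.descFactorial j) * η ^ j * Real.exp (-ε * n) ≤
        tau A lam nu n := by
  intro ε hε
  have htau := tau_nonneg A hlam hnu
  set c : ℝ := ε * δ / 4 with hc_def
  have hc : 0 < c := by positivity
  have hexpc : Real.exp (-c) < 1 := by
    rw [Real.exp_lt_one_iff]; linarith
  have hε' : 0 < 1 - Real.exp (-c) := by linarith
  obtain ⟨N₁, hN₁⟩ := Filter.eventually_atTop.mp (hmain.and (hg (1 - Real.exp (-c)) hε'))
  set N₀ : ℕ := max N₁ ⌈(2:ℝ)/δ⌉₊ with hN₀def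
  have hN₀2 : 2 ≤ δ * N₀ := by
    have h1 : (2:ℝ)/δ ≤ (⌈(2:ℝ)/δ⌉₊ : ℝ) := Nat.le_ceil _
    have h2 : ((⌈(2:ℝ)/δ⌉₊ : ℕ) : ℝ) ≤ (N₀ : ℝ) := Nat.cast_le.mpr (le_max_right _ _)
    have : (2:ℝ)/δ ≤ (N₀ : ℝ) := le_trans h1 h2
    calc (2:ℝ) = δ * (2/δ) := by field_simp
      _ ≤ δ * N₀ := mul_le_mul_of_nonneg_left this hδ0.le
  have H : ∀ n : ℕ, N₀ ≤ n → ∀ j : ℕ, 1 ≤ j → (j : ℝ) ≤ δ * n →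
      tau A lam nu (n - j) * (n.descFactorial j) * η ^ j * Real.exp (-(c * n)) ≤
        tau A lam nu n := by
    intro n hn j hj1 hj2
    have hn1 : N₁ ≤ n := le_trans (le_max_left _ _) hn
    obtain ⟨hm, hgn, _⟩ := hN₁ n hn1
    have hge : Real.exp (-(c * n)) ≤ g n := by
      have : Real.exp (-(c * n)) = (1 - (1 - Real.exp (-c))) ^ n := by
        rw [show (1 - (1 - Real.exp (-c))) = Real.exp (-c) from by ring,
          ← Real.exp_nat_mul]
        congr 1; ring
      rw [this]; exact hgn
    calc tau A lam nu (n - j) * (n.descFactorial j) * η ^ j * Real.exp (-(c * n))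
        ≤ tau A lam nu (n - j) * (n.descFactorial j) * η ^ j * g n :=
          mul_le_mul_of_nonneg_left hge (mul_nonneg (mul_nonneg (htau _)
            (Nat.cast_nonneg _)) (pow_nonneg hη0.le _))
      _ ≤ tau A lam nu n := hm j hj1 hj2
  have hchain := tau_chain A lam nu hlam hnu δ η c hδ0 hδ1 hη0 hc N₀ hN₀2 H
  have h2cδ : 2 * c / δ = ε / 2 := by
    rw [hc_def]; field_simp; ring
  rw [h2cδ] at hchain
  obtain ⟨n₁, hn₁N, hn₁ne⟩ := hinf N₀
  have hτ1 : 0 < tau A lam nu n₁ := tau_pos A hlam hnu n₁ hn₁ne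
  set B : ℝ := ∑ k ∈ Finset.range N₀, tau A lam nu k * (n₁.descFactorial (n₁ - k)) with hBdef
  have hkB : ∀ k, k < N₀ → tau A lam nu k * (n₁.descFactorial (n₁ - k)) ≤ B := by
    intro k hk
    exact Finset.single_le_sum (f := fun k => tau A lam nu k * (n₁.descFactorial (n₁ - k)))
      (fun i _ => mul_nonneg (htau i) (Nat.cast_nonneg _)) (Finset.mem_range.mpr hk)
  set r : ℝ := Real.exp (-(ε/2)) with hrdef
  have hr0 : 0 < r := Real.exp_pos _
  have hr1 : r < 1 := by rw [hrdef, Real.exp_lt_one_iff]; linarith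
  have htend : Tendsto (fun n : ℕ => B * r ^ n) atTop (nhds 0) := by
    have := (tendsto_pow_atTop_nhds_zero_of_lt_one hr0.le hr1).const_mul B
    simpa using this
  have hBev : ∀ᶠ n : ℕ in atTop, B * r ^ n < tau A lam nu n₁ :=
    htend.eventually (gt_mem_nhds hτ1)
  filter_upwards [hBev, eventually_ge_atTop n₁] with n hBn hn₁n
  intro j hj1 hjn
  set k := n - j with hkdef
  have hjk : j = n - k := by omega
  have hkn : k ≤ n := by omega
  have hEr : Real.exp (-(ε/2 * n)) = r ^ n := by
    rw [hrdef, ← Real.exp_nat_mul]; congr 1; ring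
  by_cases hkN : N₀ ≤ k
  · have h := hchain n k hkN hkn
    rw [show n - k = j from by omega] at h
    refine le_trans ?_ h
    apply mul_le_mul_of_nonneg_left _ (mul_nonneg (mul_nonneg (htau k) (Nat.cast_nonneg _))
      (pow_nonneg hη0.le _))
    apply Real.exp_le_exp.mpr
    have : (0:ℝ) ≤ ε * n := by positivity
    nlinarith [Nat.cast_nonneg (α := ℝ) n]
  · push_neg at hkN
    have hkn₁ : k ≤ n₁ := le_trans hkN.le hn₁N
    have hsplit : (n.descFactorial j : ℝ)
        = (n.descFactorial (n - n₁) : ℝ) * (n₁.descFactorial (n₁ - k) : ℝ) := by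
      rw [hjk, show n - k = (n - n₁) + (n₁ - k) from by omega, descFactorial_split,
        show n - (n - n₁) = n₁ from by omega]
      push_cast; ring
    have hpow : η ^ j = η ^ (n₁ - k) * η ^ (n - n₁) := by
      rw [← pow_add]; congr 1; omega
    have hexp2 : Real.exp (-ε * n) = Real.exp (-(ε/2 * n)) * Real.exp (-(ε/2 * n)) := by
      rw [← Real.exp_add]; congr 1; ring
    have step1 : tau A lam nu k * (n₁.descFactorial (n₁ - k) : ℝ) * η ^ (n₁ - k) *
        Real.exp (-(ε/2 * n)) ≤ tau A lam nu n₁ := by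
      have e1 : tau A lam nu k * (n₁.descFactorial (n₁ - k) : ℝ) * η ^ (n₁ - k) ≤ B := by
        calc tau A lam nu k * (n₁.descFactorial (n₁ - k) : ℝ) * η ^ (n₁ - k)
            ≤ tau A lam nu k * (n₁.descFactorial (n₁ - k) : ℝ) * 1 :=
              mul_le_mul_of_nonneg_left (pow_le_one₀ hη0.le hη1)
                (mul_nonneg (htau k) (Nat.cast_nonneg _))
          _ = tau A lam nu k * (n₁.descFactorial (n₁ - k) : ℝ) := mul_one _
          _ ≤ B := hkB k hkN
      calc tau A lam nu k * (n₁.descFactorial (n₁ - k) : ℝ) * η ^ (n₁ - k) *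
            Real.exp (-(ε/2 * n))
          ≤ B * Real.exp (-(ε/2 * n)) :=
            mul_le_mul_of_nonneg_right e1 (Real.exp_pos _).le
        _ = B * r ^ n := by rw [hEr]
        _ ≤ tau A lam nu n₁ := hBn.le
    calc tau A lam nu k * (n.descFactorial j) * η ^ j * Real.exp (-ε * n)
        = (tau A lam nu k * (n₁.descFactorial (n₁ - k)) * η ^ (n₁ - k) *
            Real.exp (-(ε/2 * n))) *
          ((n.descFactorial (n - n₁)) * η ^ (n - n₁) * Real.exp (-(ε/2 * n))) := by
          rw [hsplit, hpow, hexp2]; ring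
      _ ≤ tau A lam nu n₁ *
          ((n.descFactorial (n - n₁)) * η ^ (n - n₁) * Real.exp (-(ε/2 * n))) :=
          mul_le_mul_of_nonneg_right step1 (by positivity)
      _ = tau A lam nu n₁ * (n.descFactorial (n - n₁)) * η ^ (n - n₁) *
            Real.exp (-(ε/2 * n)) := by ring
      _ ≤ tau A lam nu n := hchain n n₁ hn₁N hn₁n

end WeightedGraphs
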